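/- arXiv:1902.02314 — 2 statements merged into one kernel-verified Lean document; each statement's English description precedes it below -/
import Mathlib

section
/- Let v be the vector field on ℝ² minus the closed negative real half-axis (including the origin) given in polar coordinates by v(ρcosθ, ρsinθ) = (ρ−1)(cosθ, sinθ) + ρθ(−sinθ, cosθ), i.e., identifying ℝ² with ℂ, v(z) = (1 − 1/|z|)·z + (arg z)·(iz). Then v is continuously differentiable on its domain and its divergence at the point z = (ρcosθ, ρsinθ) equals 3 − 1/ρ. -/
/-! Write `v = f • z + g • (iz)` with `f = 1 - 1/|z|` and `g = arg`. The product rule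
`div (φ X) = φ div X + dφ(X)`, together with `div z = 2` and `div (iz) = 0`, reduces the
divergence to a radial derivative of `f` and an angular derivative of `arg`. The first is
`1/|z|` because `|·|` is differentiable with `d|·|_z(z) = |z|`; the second is
`Im (iz / z) = 1` because `arg = Im ∘ log` and `log' z = 1/z` on the slit plane. Hence
`div v = 2 (1 - 1/|z|) + 1/|z| + 1 = 3 - 1/|z|`. -/

open Real

noncomputable section

def divg (A : ℂ → ℂ) (z : ℂ) : ℝ := (fderiv ℝ A z 1).re + (fderiv ℝ A z Complex.I).im

def vField (z : ℂ) : ℂ :=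
  ((1 - ‖z‖⁻¹ : ℝ) : ℂ) * z + ((Complex.arg z : ℝ) : ℂ) * (Complex.I * z)

theorem DifferentiableAt.fderiv_norm_inv_self {E : Type*} [NormedAddCommGroup E]
    [NormedSpace ℝ E] {x : E} (h : DifferentiableAt ℝ (‖·‖) x) :
    fderiv ℝ (fun y => ‖y‖⁻¹) x x = -‖x‖⁻¹ := by
  rcases eq_or_ne x 0 with rfl | hx
  · simp
  have hinv : DifferentiableAt ℝ (fun t : ℝ => t⁻¹) ‖x‖ :=
    differentiableAt_inv_iff.2 (norm_ne_zero_iff.2 hx)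
  have hcomp := fderiv_comp x hinv h
  rw [Function.comp_def] at hcomp
  rw [hcomp, ContinuousLinearMap.comp_apply, h.fderiv_norm_self, fderiv_inv]
  simp only [ContinuousLinearMap.toSpanSingleton_apply, smul_eq_mul]
  field_simp

namespace Complex

theorem contDiffAt_arg {n : WithTop ℕ∞} {z : ℂ} (hz : z ∈ slitPlane) :
    ContDiffAt ℝ n arg z := by
  have : ContDiffAt ℝ n (fun w => (log w).im) z :=
    imCLM.contDiff.contDiffAt.comp z ((contDiffAt_log hz).restrict_scalars ℝ)
  simpa only [log_im] using this

theorem fderiv_arg_apply {z : ℂ} (hz : z ∈ slitPlane) (v : ℂ) :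
    fderiv ℝ arg z v = (v * z⁻¹).im := by
  have hlog := (hasDerivAt_log hz).hasFDerivAt.restrictScalars ℝ
  have harg : arg = imCLM ∘ log := funext fun w => (log_im w).symm
  rw [harg, (imCLM.hasFDerivAt.comp z hlog).fderiv]
  simp

theorem ofReal_mul_exp_mem_slitPlane {ρ θ : ℝ} (hρ : 0 < ρ) (hθ : θ ∈ Set.Ioo (-π) π) :
    (ρ : ℂ) * exp (θ * I) ∈ slitPlane := by
  have harg : arg ((ρ : ℂ) * exp (θ * I)) = θ := by
    rw [arg_real_mul _ hρ, exp_mul_I, arg_cos_add_sin_mul_I (Set.Ioo_subset_Ioc_self hθ)]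
  rw [mem_slitPlane_iff_arg, harg]
  exact ⟨hθ.2.ne, mul_ne_zero (ofReal_ne_zero.2 hρ.ne') (exp_ne_zero _)⟩

end Complex

section Divergence

variable {z : ℂ}

theorem divg_add {A B : ℂ → ℂ} (hA : DifferentiableAt ℝ A z) (hB : DifferentiableAt ℝ B z) :
    divg (fun w => A w + B w) z = divg A z + divg B z := by
  simp only [divg, fderiv_fun_add hA hB, add_apply, Complex.add_re, Complex.add_im]
  ring

theorem divg_ofReal_mul {f : ℂ → ℝ} {X : ℂ → ℂ} (hf : DifferentiableAt ℝ f z)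
    (hX : DifferentiableAt ℝ X z) :
    divg (fun w => (f w : ℂ) * X w) z = f z * divg X z + fderiv ℝ f z (X z) := by
  simp only [← Complex.real_smul]
  have hXz : X z = (X z).re • (1 : ℂ) + (X z).im • Complex.I := by
    simp [Complex.re_add_im]
  conv_rhs => rw [hXz]
  simp only [divg, fderiv_fun_smul hf hX, add_apply, smul_apply,
    ContinuousLinearMap.smulRight_apply, map_add, map_smul,
    Complex.add_re, Complex.add_im, Complex.smul_re, Complex.smul_im, smul_eq_mul]
  ring

theorem divg_id : divg (fun w => w) z = 2 := by
  norm_num [divg]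

theorem divg_I_mul : divg (fun w => Complex.I * w) z = 0 := by
  have : fderiv ℝ (fun w => Complex.I * w) z = ContinuousLinearMap.mul ℝ ℂ Complex.I :=
    (ContinuousLinearMap.mul ℝ ℂ Complex.I).fderiv
  simp [divg, this]

end Divergence

theorem contDiffAt_vField {n : WithTop ℕ∞} {z : ℂ} (hz : z ∈ Complex.slitPlane) :
    ContDiffAt ℝ n vField z := by
  have hz0 : z ≠ 0 := Complex.slitPlane_ne_zero hz
  have hradial : ContDiffAt ℝ n (fun w : ℂ => ((1 - ‖w‖⁻¹ : ℝ) : ℂ)) z :=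
    Complex.ofRealCLM.contDiff.contDiffAt.comp z
      (contDiffAt_const.sub ((contDiffAt_norm ℝ hz0).inv (norm_ne_zero_iff.2 hz0)))
  have hangular : ContDiffAt ℝ n (fun w : ℂ => ((Complex.arg w : ℝ) : ℂ)) z :=
    Complex.ofRealCLM.contDiff.contDiffAt.comp z (Complex.contDiffAt_arg hz)
  exact (hradial.mul contDiffAt_id).add (hangular.mul (contDiffAt_const.mul contDiffAt_id))

theorem divg_vField {z : ℂ} (hz : z ∈ Complex.slitPlane) : divg vField z = 3 - ‖z‖⁻¹ := by
  have hz0 : z ≠ 0 := Complex.slitPlane_ne_zero hz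
  have hnorm : DifferentiableAt ℝ (‖·‖) z :=
    (contDiffAt_norm ℝ (n := 1) hz0).differentiableAt one_ne_zero
  have harg : DifferentiableAt ℝ Complex.arg z :=
    (Complex.contDiffAt_arg (n := 1) hz).differentiableAt one_ne_zero
  unfold vField
  rw [divg_add, divg_ofReal_mul, divg_ofReal_mul, divg_id, divg_I_mul, fderiv_const_sub,
    neg_apply, hnorm.fderiv_norm_inv_self, Complex.fderiv_arg_apply hz]
  · rw [mul_assoc, mul_inv_cancel₀ hz0, mul_one, Complex.I_im]
    ring
  all_goals fun_prop (disch := exact norm_ne_zero_iff.2 hz0)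

/-- Lemma 2.2 (b): `v` is continuously differentiable on `ℂ` minus the closed negative
real half-axis (Mathlib's `Complex.slitPlane`), and
`div v(ρ cos θ, ρ sin θ) = 3 - 1/ρ`. -/
theorem vField_contDiff_and_div :
    ContDiffOn ℝ 1 vField Complex.slitPlane ∧
    ∀ ρ θ : ℝ, 0 < ρ → θ ∈ Set.Ioo (-π) π →
      divg vField ((ρ : ℂ) * Complex.exp (θ * Complex.I)) = 3 - 1 / ρ := by
  refine ⟨fun z hz => (contDiffAt_vField hz).contDiffWithinAt, fun ρ θ hρ hθ => ?_⟩
  rw [divg_vField (Complex.ofReal_mul_exp_mem_slitPlane hρ hθ), norm_mul,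
    Complex.norm_exp_ofReal_mul_I, mul_one, Complex.norm_of_nonneg hρ.le, one_div]
end
end

section
/- Let v be the vector field on ℝ² minus the closed negative real half-axis (including the origin) given by v(z) = (1 − 1/|z|)·z + (arg z)·(iz), identifying ℝ² with ℂ. Then for every point z = (ρcosθ, ρsinθ) in the domain and every ξ = (ξ₁, ξ₂) ∈ ℝ², the Fréchet derivative of v satisfies dv(z)[ξ] = ξ_N(cosθ, sinθ) + ξ_N θ(−sinθ, cosθ) − ξ_T θ(cosθ, sinθ) + ξ_T(2 − 1/ρ)(−sinθ, cosθ), where ξ_N = ξ₁cosθ + ξ₂sinθ and ξ_T = −ξ₁sinθ + ξ₂cosθ. -/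
open Real

noncomputable section

/-! Since `‖z‖⁻¹ = exp (-Re log z)` and `arg z = Im log z`, the field factors as
`v(z) = z · g(log z)` with `g(w) = 1 - exp (-Re w) + i Im w`. On the slit plane `log` is
differentiable with derivative `ξ ↦ ξ / z`, so the product and chain rules give
`dv(z)[ξ] = ξ · g(log z) + z · dg(log z)[ξ / z]`. At `z = ρ e^{iθ}` one has
`ξ / z = (ξ_N + i ξ_T) / ρ`, and the formula is a rearrangement of this. -/

open Complex

def vFieldFactor (w : ℂ) : ℂ :=
  1 - (Real.exp (-w.re) : ℂ) + w.im * I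

theorem vField_eq_mul_vFieldFactor_log (z : ℂ) : vField z = z * vFieldFactor (log z) := by
  rcases eq_or_ne z 0 with rfl | hz
  · simp [vField]
  · rw [vField, vFieldFactor, log_re, log_im, ← Real.log_inv, Real.exp_log (by positivity)]
    push_cast
    ring

theorem hasFDerivAt_vFieldFactor (w : ℂ) :
    HasFDerivAt vFieldFactor
      (Real.exp (-w.re) • ofRealCLM.comp reCLM + I • ofRealCLM.comp imCLM) w := by
  have hexp : HasFDerivAt (fun w : ℂ => (Real.exp (-w.re) : ℂ))
      (-Real.exp (-w.re) • ofRealCLM.comp reCLM) w :=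
    (ofRealCLM.hasFDerivAt.comp w reCLM.hasFDerivAt.neg.exp).congr_fderiv (by ext; simp)
  have him : HasFDerivAt (fun w : ℂ => (w.im : ℂ) * I) (I • ofRealCLM.comp imCLM) w :=
    ((ofRealCLM.hasFDerivAt.comp w imCLM.hasFDerivAt).mul_const I).congr_fderiv (by ext; simp)
  exact (((hasFDerivAt_const 1 w).sub hexp).add him).congr_fderiv (by ext; simp)

theorem fderiv_vField_apply {z : ℂ} (hz : z ∈ slitPlane) (ξ : ℂ) :
    fderiv ℝ vField z ξ =
      ξ * (1 - ‖z‖⁻¹ + arg z * I) + z * (‖z‖⁻¹ * (ξ / z).re + (ξ / z).im * I) := by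
  have hexp : Real.exp (-(log z).re) = ‖z‖⁻¹ := by
    rw [log_re, Real.exp_neg, Real.exp_log (norm_pos_iff.2 (slitPlane_ne_zero hz))]
  have h : HasFDerivAt (fun z => z * vFieldFactor (Complex.log z)) _ z :=
    (hasFDerivAt_id z).mul
      ((hasFDerivAt_vFieldFactor (Complex.log z)).comp z (hasStrictFDerivAt_log_real hz).hasFDerivAt)
  rw [funext vField_eq_mul_vFieldFactor_log, h.fderiv]
  simp only [vFieldFactor, id_eq, hexp, ContinuousLinearMap.add_comp,
    ContinuousLinearMap.smul_comp, smul_add, ofReal_inv, log_im, add_apply, smul_apply,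
    ContinuousLinearMap.comp_apply, one_apply_eq_self, smul_eq_mul, reCLM_apply, ofRealCLM_apply,
    real_smul, imCLM_apply, ContinuousLinearMap.id_apply, div_eq_inv_mul]
  ring

theorem div_exp_mul_I (ξ : ℂ) (θ : ℝ) :
    ξ / exp (θ * I) =
      ↑(ξ.re * Real.cos θ + ξ.im * Real.sin θ) + ↑(-ξ.re * Real.sin θ + ξ.im * Real.cos θ) * I := by
  rw [div_eq_mul_inv, ← Complex.exp_neg, ← neg_mul, ← ofReal_neg, exp_mul_I]
  apply Complex.ext <;> simp

theorem arg_ofReal_mul_exp_mul_I {ρ θ : ℝ} (hρ : 0 < ρ) (hθ : θ ∈ Set.Ioc (-π) π) :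
    arg (ρ * exp (θ * I)) = θ := by
  rw [arg_real_mul _ hρ, arg_exp_mul_I, toIocMod_eq_self]
  rwa [neg_add_eq_sub, two_mul, add_sub_cancel_right]

/-- At each point `z = ρ e^{iθ}` of the slit plane (`ρ > 0`, `|θ| < π`), the Fréchet
derivative of `v` is given by
`dv(z)[ξ] = ξ_N(cos θ, sin θ) + ξ_N θ(-sin θ, cos θ) - ξ_T θ(cos θ, sin θ)
            + ξ_T(2 - 1/ρ)(-sin θ, cos θ)`,
where `ξ_N = ξ₁ cos θ + ξ₂ sin θ`, `ξ_T = -ξ₁ sin θ + ξ₂ cos θ`, and in `ℂ ≅ ℝ²` one has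
`(cos θ, sin θ) = e^{iθ}` and `(-sin θ, cos θ) = i e^{iθ}`. -/
theorem vField_deriv_formula (ρ θ : ℝ) (hρ : 0 < ρ) (hθ : θ ∈ Set.Ioo (-π) π)
    (ξ : ℂ) (ξN ξT : ℝ)
    (hN : ξN = ξ.re * Real.cos θ + ξ.im * Real.sin θ)
    (hT : ξT = -ξ.re * Real.sin θ + ξ.im * Real.cos θ) :
    fderiv ℝ vField ((ρ : ℂ) * Complex.exp (θ * Complex.I)) ξ =
      (ξN : ℂ) * Complex.exp (θ * Complex.I) +
        ((ξN * θ : ℝ) : ℂ) * (Complex.I * Complex.exp (θ * Complex.I)) -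
        ((ξT * θ : ℝ) : ℂ) * Complex.exp (θ * Complex.I) +
        ((ξT * (2 - 1 / ρ) : ℝ) : ℂ) * (Complex.I * Complex.exp (θ * Complex.I)) := by
  set e := exp (θ * I)
  have hnorm : ‖(ρ : ℂ) * e‖ = ρ := by
    rw [norm_mul, norm_exp_ofReal_mul_I, norm_real, Real.norm_of_nonneg hρ.le, mul_one]
  have harg : arg ((ρ : ℂ) * e) = θ := arg_ofReal_mul_exp_mul_I hρ (Set.Ioo_subset_Ioc_self hθ)
  have hslit : (ρ : ℂ) * e ∈ slitPlane :=
    mem_slitPlane_iff_arg.2 ⟨harg ▸ hθ.2.ne, by rw [← norm_ne_zero_iff, hnorm]; exact hρ.ne'⟩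
  have hrot : ξ / e = ξN + ξT * I := by rw [hN, hT, div_exp_mul_I]
  have hquot : ξ / (ρ * e) = (ξN + ξT * I) / ρ := by rw [mul_comm, ← div_div, hrot]
  have hξ : ξ = (ξN + ξT * I) * e := by rw [← hrot, div_mul_cancel₀ _ (Complex.exp_ne_zero _)]
  rw [fderiv_vField_apply hslit, hnorm, harg, hquot, hξ]
  simp only [ofReal_inv, div_ofReal_re, add_re, ofReal_re, mul_re, I_re, mul_zero, ofReal_im, I_im,
    mul_one, sub_self, add_zero, ofReal_div, div_ofReal_im, add_im, mul_im, zero_add, ofReal_mul,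
    one_div, ofReal_sub, ofReal_ofNat]
  have hρ₀ : (ρ : ℂ) ≠ 0 := ofReal_ne_zero.2 hρ.ne'
  field_simp
  linear_combination e * ξT * ρ * θ * I_sq
end
end
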